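/- Derivative identities for the Marchenko–Pastur Stieltjes transforms. Fix y > 0. For all z in the complex upper half-plane, the following identities hold: (m_1(z)/2) · ( z m_1(z) (2 m_2′(z) + m_2(z)/z) + m_1(z) − 1/z ) = m_1′(z), and (m_2(z)/2) · ( z y m_2(z) (2 m_1′(z) + m_1(z)/z) + m_2(z) − 1/z ) = m_2′(z). -/

import Mathlib

/-!
Both transforms are rational functions of `z` and of `R = i √((λ₊ - z)(z - λ₋))`, where
`R² = z² - 2(1 + y) z + (1 - y)²` because `λ₊ + λ₋ = 2 + 2y` and `λ₊ λ₋ = (1 - y)²`. This gives the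
coupled self-consistent equations `z m₁ (1 + m₂) = -1` and `z m₂ (1 + y m₁) = -1` on the open upper
half-plane. Differentiating an equation `z f (1 + c g) = -1` and eliminating `1 + c g` with the
equation itself yields `f′ = c z f² g′ - f / z`, which is each of the two identities.
-/

noncomputable section

/-- `λ₊ = (1 + √y)²`. -/
def lamP (y : ℝ) : ℝ := (1 + Real.sqrt y) ^ 2

/-- `λ₋ = (1 − √y)²`. -/
def lamM (y : ℝ) : ℝ := (1 - Real.sqrt y) ^ 2

/-- The Marchenko–Pastur Stieltjes transform `m₁` on the upper half-plane, where the square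
root is the principal complex square root (branch cut on the negative real axis). -/
def m1C (y : ℝ) (z : ℂ) : ℂ :=
  (1 - (y : ℂ) - z + Complex.I * (((lamP y : ℂ) - z) * (z - (lamM y : ℂ))) ^ ((1 : ℂ) / 2))
    / (2 * z * (y : ℂ))

/-- The Marchenko–Pastur Stieltjes transform `m₂` on the upper half-plane. -/
def m2C (y : ℝ) (z : ℂ) : ℂ :=
  ((y : ℂ) - 1 - z + Complex.I * (((lamP y : ℂ) - z) * (z - (lamM y : ℂ))) ^ ((1 : ℂ) / 2))
    / (2 * z)

open Complex Filter Topology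

theorem HasDerivAt.eq_of_eventually_mul_one_add_mul_eq_neg_one {𝕜 : Type*}
    [NontriviallyNormedField 𝕜] [CharZero 𝕜] {f g : 𝕜 → 𝕜} {f' g' c z : 𝕜}
    (hf : HasDerivAt f f' z) (hg : HasDerivAt g g' z)
    (h : ∀ᶠ w in 𝓝 z, w * f w * (1 + c * g w) = -1) :
    f z / 2 * (z * c * f z * (2 * g' + g z / z) + f z - 1 / z) = f' := by
  have hz_eq : z * f z * (1 + c * g z) = -1 := h.self_of_nhds
  have hz : z ≠ 0 := by rintro rfl; simp at hz_eq
  have hderiv : (1 * f z + z * f') * (1 + c * g z) + z * f z * (0 + c * g') = 0 :=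
    (((hasDerivAt_id z).mul hf).mul ((hasDerivAt_const z 1).add (hg.const_mul c))).unique
      ((hasDerivAt_const z (-1)).congr_of_eventuallyEq h)
  field_simp
  linear_combination 2 * z * f z * hderiv - (f z + 2 * z * f') * hz_eq

theorem ofReal_sub_mul_sub_ofReal_mem_slitPlane (p m : ℝ) {z : ℂ} (hz : 0 < z.im) :
    ((p : ℂ) - z) * (z - m) ∈ slitPlane := by
  rw [mem_slitPlane_iff]
  by_cases him : (((p : ℂ) - z) * (z - m)).im = 0
  · left
    -- a real value forces `z.re = (p + m) / 2`, where the real part is `((p - m) / 2)² + z.im²`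
    have hre : 2 * z.re = p + m := by
      simp only [mul_im, sub_re, sub_im, ofReal_re, ofReal_im] at him
      have : z.im * (p + m - 2 * z.re) = 0 := by linear_combination him
      rcases mul_eq_zero.mp this with h | h
      · exact absurd h hz.ne'
      · linarith
    have : (((p : ℂ) - z) * (z - m)).re = (p - z.re) * (z.re - m) + z.im ^ 2 := by
      simp only [mul_re, sub_re, sub_im, ofReal_re, ofReal_im]; ring
    rw [this]
    nlinarith [sq_nonneg (p - m)]
  · exact Or.inr him

theorem lamP_add_lamM {y : ℝ} (hy : 0 ≤ y) : lamP y + lamM y = 2 + 2 * y := by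
  simp only [lamP, lamM]; nlinarith [Real.sq_sqrt hy]

theorem lamP_mul_lamM {y : ℝ} (hy : 0 ≤ y) : lamP y * lamM y = (1 - y) ^ 2 := by
  simp only [lamP, lamM]; nlinarith [Real.sq_sqrt hy]

def mpRoot (y : ℝ) (z : ℂ) : ℂ :=
  (((lamP y : ℂ) - z) * (z - (lamM y : ℂ))) ^ ((1 : ℂ) / 2)

theorem m1C_eq_mpRoot (y : ℝ) (z : ℂ) :
    m1C y z = (1 - y - z + I * mpRoot y z) / (2 * z * y) := rfl

theorem m2C_eq_mpRoot (y : ℝ) (z : ℂ) :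
    m2C y z = (y - 1 - z + I * mpRoot y z) / (2 * z) := rfl

theorem I_mul_mpRoot_sq {y : ℝ} (hy : 0 ≤ y) (z : ℂ) :
    (I * mpRoot y z) ^ 2 = z ^ 2 - 2 * (1 + y) * z + (1 - y) ^ 2 := by
  have hroot : mpRoot y z ^ 2 = ((lamP y : ℂ) - z) * (z - (lamM y : ℂ)) := by
    rw [mpRoot, one_div]; exact cpow_ofNat_inv_pow _ 2
  have hsum : (lamP y : ℂ) + lamM y = 2 + 2 * y := by exact_mod_cast lamP_add_lamM hy
  have hprod : (lamP y : ℂ) * lamM y = (1 - y) ^ 2 := by exact_mod_cast lamP_mul_lamM hy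
  linear_combination I ^ 2 * hroot + ((lamP y : ℂ) - z) * (z - (lamM y : ℂ)) * I_sq
    - z * hsum + hprod

theorem m1C_self_consistent {y : ℝ} (hy : 0 < y) {z : ℂ} (hz : z ≠ 0) :
    z * m1C y z * (1 + m2C y z) = -1 := by
  have hy' : (y : ℂ) ≠ 0 := by exact_mod_cast hy.ne'
  have hR := I_mul_mpRoot_sq hy.le z
  rw [m1C_eq_mpRoot, m2C_eq_mpRoot]
  field_simp
  linear_combination hR

theorem m2C_self_consistent {y : ℝ} (hy : 0 < y) {z : ℂ} (hz : z ≠ 0) :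
    z * m2C y z * (1 + y * m1C y z) = -1 := by
  have hy' : (y : ℂ) ≠ 0 := by exact_mod_cast hy.ne'
  have hR := I_mul_mpRoot_sq hy.le z
  rw [m1C_eq_mpRoot, m2C_eq_mpRoot]
  field_simp
  linear_combination hR

theorem differentiableAt_mpRoot (y : ℝ) {z : ℂ} (hz : 0 < z.im) :
    DifferentiableAt ℂ (mpRoot y) z :=
  (by fun_prop : DifferentiableAt ℂ (fun w : ℂ => ((lamP y : ℂ) - w) * (w - lamM y)) z).cpow
    (differentiableAt_const _) (ofReal_sub_mul_sub_ofReal_mem_slitPlane _ _ hz)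

theorem differentiableAt_m1C {y : ℝ} (hy : y ≠ 0) {z : ℂ} (hz : 0 < z.im) :
    DifferentiableAt ℂ (m1C y) z := by
  have := differentiableAt_mpRoot y hz
  have hz' : z ≠ 0 := by rintro rfl; simp at hz
  have hy' : (y : ℂ) ≠ 0 := by exact_mod_cast hy
  show DifferentiableAt ℂ (fun w => (1 - y - w + I * mpRoot y w) / (2 * w * y)) z
  exact .div (by fun_prop) (by fun_prop) (by simp [hz', hy'])

theorem differentiableAt_m2C (y : ℝ) {z : ℂ} (hz : 0 < z.im) :
    DifferentiableAt ℂ (m2C y) z := by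
  have := differentiableAt_mpRoot y hz
  have hz' : z ≠ 0 := by rintro rfl; simp at hz
  show DifferentiableAt ℂ (fun w => (y - 1 - w + I * mpRoot y w) / (2 * w)) z
  exact .div (by fun_prop) (by fun_prop) (by simp [hz'])

/-- **Derivative identities for the Marchenko–Pastur Stieltjes transforms**:
`(m₁/2)(z m₁ (2m₂′ + m₂/z) + m₁ − 1/z) = m₁′` and
`(m₂/2)(z y m₂ (2m₁′ + m₁/z) + m₂ − 1/z) = m₂′`. -/
theorem mp_stieltjes_derivative_identities (y : ℝ) (hy : 0 < y) (z : ℂ) (hz : 0 < z.im) :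
    m1C y z / 2 * (z * m1C y z * (2 * deriv (m2C y) z + m2C y z / z) + m1C y z - 1 / z)
        = deriv (m1C y) z ∧
    m2C y z / 2 * (z * (y : ℂ) * m2C y z * (2 * deriv (m1C y) z + m1C y z / z)
          + m2C y z - 1 / z)
        = deriv (m2C y) z := by
  have hz' : ∀ᶠ w in 𝓝 z, w ≠ 0 := eventually_ne_nhds (by rintro rfl; simp at hz)
  have hm1 := (differentiableAt_m1C hy.ne' hz).hasDerivAt
  have hm2 := (differentiableAt_m2C y hz).hasDerivAt
  constructor
  · simpa using hm1.eq_of_eventually_mul_one_add_mul_eq_neg_one (c := 1) hm2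
      (hz'.mono fun w hw => by simpa using m1C_self_consistent hy hw)
  · exact hm2.eq_of_eventually_mul_one_add_mul_eq_neg_one hm1
      (hz'.mono fun w hw => m2C_self_consistent hy hw)
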